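/- arXiv:1106.5523 — 9 statements merged into one kernel-verified Lean document; each statement's English description precedes it below -/
import Mathlib

section
/- Let S be an ordered abelian semigroup and u ∈ S a compact element (u ≪ u). If there exist an element x ∈ S and integers 1 ≤ n < m with m·x ≤ u ≤ n·x, then u is properly infinite, i.e., 2u ≤ u. -/
/-!
Since `u + x ≤ (n + 1) • x ≤ m • x ≤ u`, the element `u` absorbs `x`, hence every multiple
of `x`; as `u ≤ n • x`, it then absorbs itself.
-/

/-- `x` is way below `y`: whenever `y` is the supremum of an increasing sequence,
`x` is dominated by some term of the sequence. -/
def WayBelow {S : Type*} [Preorder S] (x y : S) : Prop :=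
  ∀ f : ℕ → S, Monotone f → IsLUB (Set.range f) y → ∃ i, x ≤ f i

section OrderedAddCommMonoid

variable {S : Type*} [AddCommMonoid S] [PartialOrder S] [IsOrderedAddMonoid S]

theorem add_nsmul_le_self_of_add_le_self {u x : S} (h : u + x ≤ u) (k : ℕ) : u + k • x ≤ u := by
  induction k with
  | zero => simp
  | succ k ih =>
    calc u + (k + 1) • x = (u + k • x) + x := by rw [succ_nsmul, add_assoc]
      _ ≤ u + x := by gcongr
      _ ≤ u := h

theorem add_le_self_of_le_nsmul {u v x : S} (h : u + x ≤ u) {n : ℕ} (hv : v ≤ n • x) :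
    u + v ≤ u :=
  (add_le_add_right hv u).trans (add_nsmul_le_self_of_add_le_self h n)

theorem add_le_self_of_nsmul_le_of_le_nsmul {u x : S} (hx : 0 ≤ x) {m n : ℕ} (hnm : n < m)
    (hmx : m • x ≤ u) (hnx : u ≤ n • x) : u + x ≤ u :=
  calc u + x ≤ n • x + x := by gcongr
    _ = (n + 1) • x := (succ_nsmul x n).symm
    _ ≤ m • x := nsmul_le_nsmul_left hx hnm
    _ ≤ u := hmx

end OrderedAddCommMonoid

theorem compact_div_properly_infinite_general {S : Type*} [AddCommMonoid S] [PartialOrder S] [IsOrderedAddMonoid S]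
    (hpos : ∀ s : S, 0 ≤ s)
    (u : S)
    (m n : ℕ) (hnm : n < m)
    (x : S) (hmx : m • x ≤ u) (hnx : u ≤ n • x) :
    u + u ≤ u :=
  add_le_self_of_le_nsmul (add_le_self_of_nsmul_le_of_le_nsmul (hpos x) hnm hmx hnx) hnx

/-- In a positively ordered abelian monoid, if `u` is compact (`u ≪ u`) and
there are `x` and integers `1 ≤ n < m` with `m • x ≤ u ≤ n • x`, then `u` is properly
infinite: `u + u ≤ u`. -/
theorem compact_div_properly_infinite {S : Type*} [AddCommMonoid S] [PartialOrder S] [IsOrderedAddMonoid S]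
    (hpos : ∀ s : S, 0 ≤ s)
    (u : S) (hu : WayBelow u u)
    (m n : ℕ) (hn : 1 ≤ n) (hnm : n < m)
    (x : S) (hmx : m • x ≤ u) (hnx : u ≤ n • x) :
    u + u ≤ u :=
  compact_div_properly_infinite_general hpos u m n hnm x hmx hnx
end

section
/- Let S be an ordered abelian semigroup and u ∈ S compact. If u is (m,n)-decomposable with n < m, meaning there exist x_1, …, x_m ∈ S with x_1 + ⋯ + x_m ≤ u and u ≤ n·x_j for all j, then n·u is properly infinite. -/
/-!
Summing `u ≤ n • x j` over the `m` indices gives `m • u ≤ n • ∑ j, x j ≤ n • u`, and positivity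
lowers this to `(n + 1) • u ≤ n • u`. Adding `u` repeatedly then shows that `n • u` dominates
every multiple of `u`, in particular `(2 * n) • u`.
-/

section OrderedMonoid

variable {S : Type*} [AddCommMonoid S] [PartialOrder S] [IsOrderedAddMonoid S]

theorem card_nsmul_le_nsmul_of_sum_le {ι : Type*} [Fintype ι] {u : S} {n : ℕ} {x : ι → S}
    (hsum : ∑ j, x j ≤ u) (hx : ∀ j, u ≤ n • x j) : Fintype.card ι • u ≤ n • u :=
  calc Fintype.card ι • u = ∑ _j : ι, u := by simp
    _ ≤ ∑ j, n • x j := Finset.sum_le_sum fun j _ => hx j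
    _ = n • ∑ j, x j := Finset.smul_sum.symm
    _ ≤ n • u := nsmul_le_nsmul_right hsum n

theorem nsmul_le_of_succ_nsmul_le {u : S} {n k : ℕ} (h : (n + 1) • u ≤ n • u) (hk : n ≤ k) :
    k • u ≤ n • u := by
  induction k, hk using Nat.le_induction with
  | base => rfl
  | succ k _ ih =>
    calc (k + 1) • u = k • u + u := succ_nsmul u k
      _ ≤ n • u + u := add_le_add_left ih u
      _ = (n + 1) • u := (succ_nsmul u n).symm
      _ ≤ n • u := h

theorem nsmul_le_of_lt_of_nsmul_le {u : S} (hu : 0 ≤ u) {m n : ℕ} (hnm : n < m)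
    (h : m • u ≤ n • u) (k : ℕ) : k • u ≤ n • u := by
  rcases le_total k n with hkn | hnk
  · exact nsmul_le_nsmul_left hu hkn
  · exact nsmul_le_of_succ_nsmul_le ((nsmul_le_nsmul_left hu hnm).trans h) hnk

end OrderedMonoid

theorem decomposable_properly_infinite_general {S : Type*} [AddCommMonoid S] [PartialOrder S] [IsOrderedAddMonoid S]
    (hpos : ∀ s : S, 0 ≤ s)
    (u : S)
    (m n : ℕ) (hnm : n < m)
    (x : Fin m → S)
    (hsum : ∑ j, x j ≤ u)
    (hx : ∀ j, u ≤ n • x j) :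
    (2 * n) • u ≤ n • u := by
  have hmu : m • u ≤ n • u := by
    simpa using card_nsmul_le_nsmul_of_sum_le hsum hx
  exact nsmul_le_of_lt_of_nsmul_le (hpos u) hnm hmu (2 * n)

/-- In a positively ordered abelian monoid, if a compact element `u` is
`(m,n)`-decomposable with `n < m`, i.e. there are `x 1, …, x m` with
`x 1 + ⋯ + x m ≤ u` and `u ≤ n • x j` for all `j`, then `n • u` is properly infinite:
`(2 * n) • u ≤ n • u`. -/
theorem decomposable_properly_infinite {S : Type*} [AddCommMonoid S] [PartialOrder S] [IsOrderedAddMonoid S]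
    (hpos : ∀ s : S, 0 ≤ s)
    (u : S) (hu : WayBelow u u)
    (m n : ℕ) (hn : 1 ≤ n) (hnm : n < m)
    (x : Fin m → S)
    (hsum : ∑ j, x j ≤ u)
    (hx : ∀ j, u ≤ n • x j) :
    (2 * n) • u ≤ n • u :=
  decomposable_properly_infinite_general hpos u m n hnm x hsum hx
end

section
/- For integers m ≥ 2 and k ≥ m, the Cuntz-semigroup divisibility number of the matrix algebra M_k(ℂ) equals ⌈k / ⌊k/m⌋⌉. Concretely: in the ordered semigroup ℕ ∪ {∞} with distinguished element k, the least n such that there exists x with m·x ≤ k ≤ n·x is ⌈k / ⌊k/m⌋⌉. -/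
/-- For integers `m ≥ 2` and `k ≥ m`, the divisibility number of `M_k(ℂ)`,
computed in `Cu(M_k(ℂ)) = ℕ ∪ {∞}` with class of the unit `k`, equals `⌈k / ⌊k/m⌋⌉`:
the least `n` such that there exists `x` with `m * x ≤ k ≤ n * x` is `k ⌈/⌉ (k / m)`. -/
theorem div_matrix_algebra (m k : ℕ) (hm : 2 ≤ m) (hk : m ≤ k) :
    IsLeast {n : ℕ | ∃ x : ℕ, m * x ≤ k ∧ k ≤ n * x} (k ⌈/⌉ (k / m)) := by
  have hm0 : 0 < m := by omega
  have hd : 0 < k / m := Nat.div_pos hk hm0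
  constructor
  · exact ⟨k / m, by rw [Nat.mul_comm]; exact Nat.div_mul_le_self k m,
      (le_smul_ceilDiv hd).trans_eq (by rw [smul_eq_mul, Nat.mul_comm])⟩
  · rintro n ⟨x, h1, h2⟩
    have hx : 0 < x := by
      rcases Nat.eq_zero_or_pos x with rfl | hx
      · simp at h2; omega
      · exact hx
    have hxd : x ≤ k / m := (Nat.le_div_iff_mul_le hm0).2 (by linarith [h1, Nat.mul_comm m x])
    have : k ≤ n * (k / m) := h2.trans (Nat.mul_le_mul_left n hxd)
    exact (ceilDiv_le_iff_le_smul hd).2 (by rw [smul_eq_mul, Nat.mul_comm]; exact this)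
end

section
/- Let m ≥ 2, k ≥ 2 with m dividing k. Then the least n such that there exists x ∈ ℕ with m·x ≤ k ≤ n·x equals m. Moreover if m does not divide k and m(m−1) ≤ k, this least n equals m+1. -/
/-- Let `m ≥ 2` and `k ≥ 2`.  If `m` divides `k`, then the least `n` such
that there is `x : ℕ` with `m * x ≤ k ≤ n * x` equals `m`.  Moreover, if `m` does not
divide `k` and `m * (m - 1) ≤ k`, then this least `n` equals `m + 1`. -/
theorem div_matrix_algebra_values (m k : ℕ) (hm : 2 ≤ m) (hk : 2 ≤ k) :
    (m ∣ k → IsLeast {n : ℕ | ∃ x : ℕ, m * x ≤ k ∧ k ≤ n * x} m) ∧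
    (¬ m ∣ k → m * (m - 1) ≤ k →
      IsLeast {n : ℕ | ∃ x : ℕ, m * x ≤ k ∧ k ≤ n * x} (m + 1)) := by
  constructor
  · rintro ⟨c, rfl⟩
    constructor
    · exact ⟨c, le_rfl, le_rfl⟩
    · rintro n ⟨x, h1, h2⟩
      have hx : 0 < x := by
        rcases Nat.eq_zero_or_pos x with h | h
        · subst h; omega
        · exact h
      exact Nat.le_of_mul_le_mul_right (h1.trans h2) hx
  · intro hdvd hle
    constructor
    · refine ⟨k / m, Nat.mul_div_le k m, ?_⟩
      have h1 : k < m * (k / m) + m := by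
        have := Nat.lt_mul_div_succ k (show 0 < m by omega)
        nlinarith [this]
      have h2 : m - 1 ≤ k / m :=
        (Nat.le_div_iff_mul_le (show 0 < m by omega)).mpr (by nlinarith)
      have : (m + 1) * (k / m) = m * (k / m) + k / m := by ring
      omega
    · rintro n ⟨x, h1, h2⟩
      have hx : 0 < x := by
        rcases Nat.eq_zero_or_pos x with h | h
        · subst h; omega
        · exact h
      have hmn : m ≤ n := Nat.le_of_mul_le_mul_right (h1.trans h2) hx
      rcases Nat.lt_or_ge m n with h | h
      · omega
      · exfalso
        have : n = m := le_antisymm h hmn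
        subst this
        exact hdvd ⟨x, le_antisymm (by omega) h1⟩
end

section
/- In the abstract tensor setting, suppose 1 ≤ m < n and there exist z_1, …, z_m ∈ T with z_1 + ⋯ + z_m ≤ e ≤ n·z_j for all j ((m,n)-decomposability of e). If x_1, …, x_m, y ∈ S satisfy n·x_j ≤ y for all j, then (x_1 + ⋯ + x_m) ⊗ e ≤ y ⊗ e. -/
/-! Bound each `x j ⊗ e` by `x j ⊗ (n • z j) = (n • x j) ⊗ z j ≤ y ⊗ z j`, sum over `j`, and use
`∑ j, z j ≤ e`. Bi-additivity alone does not force `a ⊗ 0 = 0`, so sums and multiples are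
pulled through `⊗` only when they are nonempty. -/

section AdditiveMap

variable {ι M N : Type*} [AddCommMonoid M] [AddCommMonoid N] (f : M → N)

theorem map_sum_of_map_add (hf : ∀ a b, f (a + b) = f a + f b) {s : Finset ι}
    (hs : s.Nonempty) (g : ι → M) : f (∑ i ∈ s, g i) = ∑ i ∈ s, f (g i) := by
  induction hs using Finset.Nonempty.cons_induction with
  | singleton i => simp
  | cons i s hi _ ih => rw [Finset.sum_cons, Finset.sum_cons, hf, ih]

theorem map_nsmul_of_map_add (hf : ∀ a b, f (a + b) = f a + f b) {n : ℕ} (hn : n ≠ 0)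
    (a : M) : f (n • a) = n • f a := by
  simpa using map_sum_of_map_add f hf (Finset.nonempty_range_iff.2 hn) fun _ => a

end AdditiveMap

/-- Abstract tensor setting.  If `1 ≤ m < n` and there are
`z 1, …, z m ∈ T` with `z 1 + ⋯ + z m ≤ e ≤ n • z j` for all `j`
(`(m,n)`-decomposability of `e`), and `x 1, …, x m, y ∈ S` satisfy `n • x j ≤ y`
for all `j`, then `(x 1 + ⋯ + x m) ⊗ e ≤ y ⊗ e`. -/
theorem tensor_comparison_decomposable {S T U : Type*}
    [AddCommMonoid S] [PartialOrder S] [IsOrderedAddMonoid S]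
    [AddCommMonoid T] [PartialOrder T] [IsOrderedAddMonoid T]
    [AddCommMonoid U] [PartialOrder U] [IsOrderedAddMonoid U]
    (tensor : S → T → U)
    (haddl : ∀ (x₁ x₂ : S) (y : T), tensor (x₁ + x₂) y = tensor x₁ y + tensor x₂ y)
    (haddr : ∀ (x : S) (y₁ y₂ : T), tensor x (y₁ + y₂) = tensor x y₁ + tensor x y₂)
    (hmono : ∀ (x₁ x₂ : S) (y₁ y₂ : T), x₁ ≤ x₂ → y₁ ≤ y₂ → tensor x₁ y₁ ≤ tensor x₂ y₂)
    (m n : ℕ) (hm : 1 ≤ m) (hmn : m < n)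
    (e : T) (z : Fin m → T) (hz₁ : ∑ j, z j ≤ e) (hz₂ : ∀ j, e ≤ n • z j)
    (x : Fin m → S) (y : S) (hxy : ∀ j, n • x j ≤ y) :
    tensor (∑ j, x j) e ≤ tensor y e := by
  have hne : (Finset.univ : Finset (Fin m)).Nonempty := Finset.univ_nonempty_iff.2 ⟨⟨0, hm⟩⟩
  have hn : n ≠ 0 := by omega
  have hshift : ∀ a b, tensor a (n • b) = tensor (n • a) b := fun a b => by
    rw [map_nsmul_of_map_add _ (haddr a) hn, map_nsmul_of_map_add (tensor · b) (haddl · · b) hn]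
  calc tensor (∑ j, x j) e = ∑ j, tensor (x j) e := map_sum_of_map_add (tensor · e) (haddl · · e) hne x
    _ ≤ ∑ j, tensor (x j) (n • z j) := Finset.sum_le_sum fun j _ => hmono _ _ _ _ le_rfl (hz₂ j)
    _ = ∑ j, tensor (n • x j) (z j) := Finset.sum_congr rfl fun j _ => hshift (x j) (z j)
    _ ≤ ∑ j, tensor y (z j) := Finset.sum_le_sum fun j _ => hmono _ _ _ _ (hxy j) le_rfl
    _ = tensor y (∑ j, z j) := (map_sum_of_map_add _ (haddr y) hne z).symm
    _ ≤ tensor y e := hmono _ _ _ _ le_rfl hz₁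
end

section
/- Let A be a unital C*-algebra (or abstractly, suppose Div_m-type numbers are defined from an ordered semigroup with compact unit u). If Div_*(A) := liminf_{m→∞} Div_m(A)/m is finite and at least 1, then for every integer m ≥ 2, Div_m(A) ≤ m·Div_*(A) + 1. -/
open scoped ENNReal

/-- `CuDiv u m` is the least `n` such that there is `x` with `m • x ≤ u ≤ n • x`
(`∞` if no such `n` exists), viewed in `ℝ≥0∞`. -/
noncomputable def CuDiv {S : Type*} [AddCommMonoid S] [PartialOrder S] [IsOrderedAddMonoid S] (u : S) (m : ℕ) : ℝ≥0∞ :=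
  sInf ((fun n : ℕ => (n : ℝ≥0∞)) '' {n : ℕ | ∃ x : S, m • x ≤ u ∧ u ≤ n • x})

/-- `CuDivStar u = liminf_{m → ∞} CuDiv u m / m`. -/
noncomputable def CuDivStar {S : Type*} [AddCommMonoid S] [PartialOrder S] [IsOrderedAddMonoid S] (u : S) : ℝ≥0∞ :=
  Filter.liminf (fun m : ℕ => CuDiv u m / (m : ℝ≥0∞)) Filter.atTop

/-!
If `k • x ≤ u ≤ N • x` and `r = k / m`, then `m • (r • x) ≤ u ≤ (N / r + 1) • (r • x)`, so
`Div_m(u) ≤ Div_k(u) / r + 1 = (k / r) · (Div_k(u) / k) + 1`. As `k → ∞` the factor `k / r`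
tends to `m`, and taking the liminf over `k` gives `Div_m(u) ≤ m · Div_*(u) + 1`.
-/

open Filter Topology

section

variable {S : Type*} [AddCommMonoid S] [PartialOrder S] [IsOrderedAddMonoid S]

theorem cuDiv_le_of_nsmul_le_of_le_nsmul {u x : S} {m n : ℕ} (hm : m • x ≤ u) (hn : u ≤ n • x) :
    CuDiv u m ≤ n :=
  sInf_le ⟨n, ⟨x, hm, hn⟩, rfl⟩

variable (hpos : ∀ s : S, 0 ≤ s) (u : S)
include hpos

theorem cuDiv_monotone : Monotone (CuDiv u) := by
  intro m k hmk
  refine sInf_le_sInf (Set.image_mono fun n ⟨x, hk, hn⟩ => ⟨x, ?_, hn⟩)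
  exact (nsmul_le_nsmul_left (hpos x) hmk).trans hk

theorem cuDiv_mul_le_add (m r : ℕ) : CuDiv u m * r ≤ CuDiv u (r * m) + r := by
  rcases Nat.eq_zero_or_pos r with rfl | hr
  · simp
  rw [CuDiv.eq_def u (r * m), ENNReal.sInf_add]
  refine le_iInf₂ fun _ ⟨N, ⟨x, hx, hN⟩, hNeq⟩ => hNeq ▸ ?_
  have hm : m • (r • x) ≤ u := by rwa [smul_smul, mul_comm]
  have hup : u ≤ (N / r + 1) • (r • x) := by
    have hNr : N ≤ (N / r + 1) * r := by
      rw [add_mul, one_mul]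
      exact (Nat.lt_div_mul_add hr).le
    rw [smul_smul]
    exact hN.trans (nsmul_le_nsmul_left (hpos x) hNr)
  calc CuDiv u m * r ≤ ((N / r + 1 : ℕ) : ℝ≥0∞) * r := by
        gcongr
        exact cuDiv_le_of_nsmul_le_of_le_nsmul hm hup
    _ = ((N / r * r + r : ℕ) : ℝ≥0∞) := by push_cast; ring
    _ ≤ N + r := by exact_mod_cast Nat.add_le_add_right (Nat.div_mul_le_self N r) r

theorem cuDiv_le_mul_div_add_one {m k : ℕ} (hm : 0 < m) (hmk : m ≤ k) :
    CuDiv u m ≤ k / (k / m : ℕ) * (CuDiv u k / k) + 1 := by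
  set r := k / m
  have hr : (r : ℝ≥0∞) ≠ 0 := Nat.cast_ne_zero.2 (Nat.div_pos hmk hm).ne'
  have hk : (k : ℝ≥0∞) ≠ 0 := Nat.cast_ne_zero.2 (hm.trans_le hmk).ne'
  have hmul : CuDiv u m * r ≤ CuDiv u k + r := by
    grw [cuDiv_mul_le_add hpos u m r, cuDiv_monotone hpos u (Nat.div_mul_le_self k m)]
  calc CuDiv u m ≤ (CuDiv u k + r) / r :=
        (ENNReal.le_div_iff_mul_le (.inl hr) (.inl (ENNReal.natCast_ne_top r))).2 hmul
    _ = CuDiv u k / r + 1 := by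
        rw [ENNReal.add_div, ENNReal.div_self hr (ENNReal.natCast_ne_top r)]
    _ = k / r * (CuDiv u k / k) + 1 := by
        rw [mul_comm, ← mul_div_assoc, ENNReal.div_mul_cancel hk (ENNReal.natCast_ne_top k)]

end

namespace ENNReal

theorem natCast_div_natCast_div_mem_Icc {m k : ℕ} (hm : 0 < m) (hmk : m ≤ k) :
    (k : ℝ≥0∞) / (k / m : ℕ) ∈ Set.Icc (m : ℝ≥0∞) (m + m * ((k / m : ℕ) : ℝ≥0∞)⁻¹) := by
  set r := k / m
  have hr : (r : ℝ≥0∞) ≠ 0 := Nat.cast_ne_zero.2 (Nat.div_pos hmk hm).ne'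
  have hr' : (r : ℝ≥0∞) ≠ ∞ := natCast_ne_top r
  constructor
  · rw [ENNReal.le_div_iff_mul_le (.inl hr) (.inl hr'), mul_comm]
    exact_mod_cast Nat.div_mul_le_self k m
  · have hk : (k : ℝ≥0∞) ≤ m * r + m := by
      exact_mod_cast (Nat.lt_div_mul_add hm).le.trans_eq (by ring)
    calc (k : ℝ≥0∞) / r ≤ (m * r + m) * (r : ℝ≥0∞)⁻¹ := by rw [div_eq_mul_inv]; gcongr
      _ = m + m * (r : ℝ≥0∞)⁻¹ := by
          rw [add_mul, mul_assoc, ENNReal.mul_inv_cancel hr hr', mul_one]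

theorem tendsto_natCast_div_natCast_div {m : ℕ} (hm : 0 < m) :
    Tendsto (fun k : ℕ => (k : ℝ≥0∞) / (k / m : ℕ)) atTop (𝓝 m) := by
  have hupper : Tendsto (fun k : ℕ => (m : ℝ≥0∞) + m * ((k / m : ℕ) : ℝ≥0∞)⁻¹) atTop (𝓝 m) := by
    simpa using (ENNReal.Tendsto.const_mul
      (ENNReal.tendsto_inv_nat_nhds_zero.comp (Nat.tendsto_div_const_atTop hm.ne'))
      (.inr (natCast_ne_top m))).const_add (m : ℝ≥0∞)
  have hmem := (eventually_ge_atTop m).mono fun k => natCast_div_natCast_div_mem_Icc hm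
  exact tendsto_of_tendsto_of_tendsto_of_le_of_le' tendsto_const_nhds hupper
    (hmem.mono fun _ => And.left) (hmem.mono fun _ => And.right)

end ENNReal

theorem div_le_mul_divStar_add_one_general {S : Type*} [AddCommMonoid S] [PartialOrder S] [IsOrderedAddMonoid S]
    (hpos : ∀ s : S, 0 ≤ s)
    (u : S) :
    ∀ m : ℕ, 2 ≤ m → CuDiv u m ≤ (m : ℝ≥0∞) * CuDivStar u + 1 := by
  intro m hm
  have hm0 : 0 < m := by omega
  set g : ℕ → ℝ≥0∞ := fun k => k / (k / m : ℕ)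
  have hg : Tendsto g atTop (𝓝 m) := ENNReal.tendsto_natCast_div_natCast_div hm0
  have hbound : ∀ᶠ k in atTop, CuDiv u m ≤ g k * (CuDiv u k / k) + 1 :=
    (eventually_ge_atTop m).mono fun k => cuDiv_le_mul_div_add_one hpos u hm0
  calc CuDiv u m ≤ liminf (fun k => g k * (CuDiv u k / k) + 1) atTop :=
        le_liminf_of_le (by isBoundedDefault) hbound
    _ = liminf (fun k => g k * (CuDiv u k / k)) atTop + 1 :=
        liminf_add_const _ _ _ (by isBoundedDefault) (by isBoundedDefault)
    _ ≤ limsup g atTop * CuDivStar u + 1 := by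
        gcongr
        exact ENNReal.liminf_mul_le (by simp [hg.limsup_eq]; omega) (by simp [hg.limsup_eq])
    _ = m * CuDivStar u + 1 := by rw [hg.limsup_eq]

/-- if `Div_*(u)` is finite and at least `1`, then for every `m ≥ 2`,
`Div_m(u) ≤ m • Div_*(u) + 1`. -/
theorem div_le_mul_divStar_add_one {S : Type*} [AddCommMonoid S] [PartialOrder S] [IsOrderedAddMonoid S]
    (hpos : ∀ s : S, 0 ≤ s)
    (u : S) (hu : WayBelow u u)
    (h1 : 1 ≤ CuDivStar u) (hfin : CuDivStar u < ⊤) :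
    ∀ m : ℕ, 2 ≤ m → CuDiv u m ≤ (m : ℝ≥0∞) * CuDivStar u + 1 :=
  div_le_mul_divStar_add_one_general hpos u
end

section
/- Let S be an ordered abelian semigroup in the category Cu with largest element ∞ (= ∞·(full element)) and let n ≥ 1. An element u ∈ S is (ω,n)-decomposable if there exist x_1, x_2, … with Σ_{i=1}^∞ x_i ≤ u and u ≤ n·x_i for all i. Then u is (ω,n)-decomposable if and only if there exist x_1, x_2, … with Σ_{i=1}^∞ x_i ≤ u and n·x_i = ∞·u for all i. -/
/-!
Split ℕ into infinitely many infinite pieces via `Nat.pair` and let `y j` be the sum of the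
`x i` over the `j`-th piece. Each `y j` still sits below `u`, and so does `Σ y j`, because
addition commutes with increasing suprema. Since `u ≤ n • x i` for infinitely many `i` inside
each piece, `n • y j ≥ k • u` for every `k`, i.e. `n • y j ≥ ∞ • u`; and `n • y j ≤ n • u ≤ ∞ • u`.
Conversely `u ≤ ∞ • u`.
-/

variable {S : Type*}

/-- The infinite sum `Σ_{i=0}^∞ x i`, defined as the supremum of the partial sums. -/
noncomputable def iSum [CompleteLattice S] [AddCommMonoid S] (x : ℕ → S) : S :=
  ⨆ k : ℕ, ∑ i ∈ Finset.range k, x i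

/-- `∞ • u`, defined as the supremum of the multiples `k • u`. -/
noncomputable def inftyMul [CompleteLattice S] [AddCommMonoid S] (u : S) : S :=
  ⨆ k : ℕ, k • u

section Sums

variable [CompleteLattice S] [AddCommMonoid S]

theorem nsmul_le_inftyMul (k : ℕ) (u : S) : k • u ≤ inftyMul u :=
  le_iSup (fun k : ℕ => k • u) k

theorem le_inftyMul (u : S) : u ≤ inftyMul u := by
  simpa using nsmul_le_inftyMul 1 u

variable [AddLeftMono S]

theorem inftyMul_le_nsmul_iSum {u : S} {n : ℕ} {x : ℕ → S} (hx : ∀ i, u ≤ n • x i) :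
    inftyMul u ≤ n • iSum x :=
  iSup_le fun k =>
    calc k • u = ∑ _i ∈ Finset.range k, u := by simp
      _ ≤ ∑ i ∈ Finset.range k, n • x i := Finset.sum_le_sum fun i _ => hx i
      _ = n • ∑ i ∈ Finset.range k, x i := Finset.smul_sum.symm
      _ ≤ n • iSum x := nsmul_le_nsmul_right (le_iSup (fun k => ∑ i ∈ Finset.range k, x i) k) n

theorem sum_le_iSum (hpos : ∀ s : S, 0 ≤ s) (x : ℕ → S) (T : Finset ℕ) :
    ∑ t ∈ T, x t ≤ iSum x := by
  obtain ⟨k, hk⟩ := T.exists_nat_subset_range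
  exact (Finset.sum_mono_set_of_nonneg (fun i => hpos (x i)) hk).trans
    (le_iSup (fun k => ∑ i ∈ Finset.range k, x i) k)

theorem monotone_sum_range (hpos : ∀ s : S, 0 ≤ s) (x : ℕ → S) :
    Monotone fun k => ∑ i ∈ Finset.range k, x i :=
  (Finset.sum_mono_set_of_nonneg fun i => hpos (x i)).comp Finset.range_mono

theorem sum_comp_le_iSum (hpos : ∀ s : S, 0 ≤ s) {α : Type*} (x : ℕ → S) {g : α → ℕ}
    (hg : g.Injective) (s : Finset α) : ∑ a ∈ s, x (g a) ≤ iSum x := by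
  classical
  rw [← Finset.sum_image hg.injOn]
  exact sum_le_iSum hpos x _

theorem iSum_comp_le_iSum (hpos : ∀ s : S, 0 ≤ s) (x : ℕ → S) {g : ℕ → ℕ}
    (hg : g.Injective) : iSum (fun i => x (g i)) ≤ iSum x :=
  iSup_le fun _ => sum_comp_le_iSum hpos x hg _

theorem iSup_add_iSup_of_monotone
    (hA4 : ∀ (a : S) (f : ℕ → S), Monotone f → a + (⨆ i, f i) = ⨆ i, a + f i)
    {f g : ℕ → S} (hf : Monotone f) (hg : Monotone g) :
    (⨆ i, f i) + (⨆ i, g i) = ⨆ i, f i + g i := by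
  refine le_antisymm ?_ (iSup_le fun i => add_le_add (le_iSup f i) (le_iSup g i))
  rw [hA4 _ _ hg]
  refine iSup_le fun j => ?_
  rw [add_comm, hA4 _ _ hf]
  exact iSup_le fun i => le_iSup_of_le (max i j) <| by
    rw [add_comm]
    exact add_le_add (hf (le_max_left i j)) (hg (le_max_right i j))

theorem finsetSum_iSup_of_monotone
    (hA4 : ∀ (a : S) (f : ℕ → S), Monotone f → a + (⨆ i, f i) = ⨆ i, a + f i)
    {α : Type*} (s : Finset α) {f : α → ℕ → S} (hf : ∀ a, Monotone (f a)) :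
    ∑ a ∈ s, ⨆ i, f a i = ⨆ i, ∑ a ∈ s, f a i := by
  induction s using Finset.cons_induction with
  | empty => simp
  | cons a s ha ih =>
    simp only [Finset.sum_cons, ih]
    exact iSup_add_iSup_of_monotone hA4 (hf a)
      fun _ _ hij => Finset.sum_le_sum fun b _ => hf b hij

theorem iSum_iSum_pair_le (hpos : ∀ s : S, 0 ≤ s)
    (hA4 : ∀ (a : S) (f : ℕ → S), Monotone f → a + (⨆ i, f i) = ⨆ i, a + f i) (x : ℕ → S) :
    iSum (fun j => iSum fun i => x (Nat.pair j i)) ≤ iSum x := by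
  refine iSup_le fun k => ?_
  change ∑ j ∈ Finset.range k, ⨆ m, ∑ i ∈ Finset.range m, x (Nat.pair j i) ≤ iSum x
  rw [finsetSum_iSup_of_monotone hA4 _ fun j => monotone_sum_range hpos _]
  refine iSup_le fun m => ?_
  rw [← Finset.sum_product']
  exact sum_comp_le_iSum hpos x (g := fun p : ℕ × ℕ => Nat.pair p.1 p.2)
    (fun p q h => Prod.ext_iff.2 (Nat.pair_eq_pair.1 h)) _

end Sums

theorem omega_n_decomposable_iff_general [CompleteLattice S] [AddCommMonoid S]
    [CovariantClass S S (· + ·) (· ≤ ·)]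
    (hpos : ∀ s : S, 0 ≤ s)
    (hA4 : ∀ (a : S) (f : ℕ → S), Monotone f → a + (⨆ i, f i) = ⨆ i, a + f i)
    (n : ℕ) (u : S) :
    (∃ x : ℕ → S, iSum x ≤ u ∧ ∀ i, u ≤ n • x i) ↔
      (∃ x : ℕ → S, iSum x ≤ u ∧ ∀ i, n • x i = inftyMul u) := by
  constructor
  · rintro ⟨x, hsum, hx⟩
    refine ⟨fun j => iSum fun i => x (Nat.pair j i),
      (iSum_iSum_pair_le hpos hA4 x).trans hsum, fun j => le_antisymm ?_ ?_⟩
    · have hpiece : iSum (fun i => x (Nat.pair j i)) ≤ u :=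
        (iSum_comp_le_iSum hpos x fun _ _ h => (Nat.pair_eq_pair.1 h).2).trans hsum
      exact (nsmul_le_nsmul_right hpiece n).trans (nsmul_le_inftyMul n u)
    · exact inftyMul_le_nsmul_iSum fun i => hx _
  · rintro ⟨x, hsum, hx⟩
    exact ⟨x, hsum, fun i => (hx i).symm ▸ le_inftyMul u⟩

/-- Let `S` be an ordered abelian semigroup in Cu in which increasing
suprema exist and addition is compatible with them, and let `n ≥ 1`.  An element `u` is
`(ω,n)`-decomposable iff there exist `x 1, x 2, …` with `Σᵢ x i ≤ u` and
`n • x i = ∞ • u` for all `i`. -/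
theorem omega_n_decomposable_iff [CompleteLattice S] [AddCommMonoid S]
    [CovariantClass S S (· + ·) (· ≤ ·)]
    (hpos : ∀ s : S, 0 ≤ s)
    (hA4 : ∀ (a : S) (f : ℕ → S), Monotone f → a + (⨆ i, f i) = ⨆ i, a + f i)
    (n : ℕ) (hn : 1 ≤ n) (u : S) :
    (∃ x : ℕ → S, iSum x ≤ u ∧ ∀ i, u ≤ n • x i) ↔
      (∃ x : ℕ → S, iSum x ≤ u ∧ ∀ i, n • x i = inftyMul u) :=
  omega_n_decomposable_iff_general hpos hA4 n u
end

section
/- A unital C*-algebra A has a character if and only if it has (N,ε)-characters for every integer N ≥ 2 and every ε > 0. -/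
open scoped ComplexOrder

variable {A : Type*} [CStarAlgebra A]

/-- A state on a unital C*-algebra: a positive linear functional of norm one. -/
def IsState (φ : A →L[ℂ] ℂ) : Prop :=
  ‖φ‖ = 1 ∧ ∀ a : A, 0 ≤ φ (star a * a)

/-- `A` has `(N,ε)`-characters if for every `N`-tuple of unitaries `u 1, …, u N` in `A`
there is a state `ρ` with `|ρ(u j)| ≥ 1 - ε` for all `j`. -/
def HasNEpsilonCharacters (A : Type*) [CStarAlgebra A] (N : ℕ) (ε : ℝ) : Prop :=
  ∀ u : Fin N → A, (∀ j, u j ∈ unitary A) →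
    ∃ φ : A →L[ℂ] ℂ, IsState φ ∧ ∀ j, 1 - ε ≤ ‖φ (u j)‖

/-!
The states form a weak-* compact set, and the states `ρ` with `|ρ u| ≥ 1 - 1/(n+1)` for the
unitaries `u` of a finite set form a closed subset of it; by hypothesis these sets have the finite
intersection property, so some state `ρ` has `|ρ u| = 1` for every unitary `u`. For such a
state, Cauchy–Schwarz applied to `ρ (star (u - ρ u) * (u - ρ u)) = 1 - |ρ u|² = 0` gives
`ρ (a * u) = ρ a * ρ u`, and since the unitaries span `A`, `ρ` is multiplicative.
-/

section StarMulSelfNonneg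

/- `CStarAlgebra` carries no order; in the spectral order the positive elements are the sums of
elements `star a * a`, so Mathlib's GNS pre-inner product `⟪a, b⟫ = φ (star a * b)` applies. -/
attribute [local instance] CStarAlgebra.spectralOrder CStarAlgebra.spectralOrderedRing

variable {φ : A →L[ℂ] ℂ}

noncomputable def positiveLinearMapOfStarMulSelfNonneg (φ : A →L[ℂ] ℂ)
    (hφ : ∀ a, 0 ≤ φ (star a * a)) : A →ₚ[ℂ] ℂ :=
  .mk₀ φ.toLinearMap fun _ hx => by
    rw [StarOrderedRing.nonneg_iff] at hx
    induction hx using AddSubmonoid.closure_induction with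
    | mem _ hs => obtain ⟨s, rfl⟩ := hs; exact hφ s
    | zero => simp
    | add _ _ _ _ h₁ h₂ => simpa using add_nonneg h₁ h₂

lemma norm_apply_star_mul_le (hφ : ∀ a, 0 ≤ φ (star a * a)) (a b : A) :
    ‖φ (star a * b)‖ ≤ √(φ (star a * a)).re * √(φ (star b * b)).re :=
  let f := positiveLinearMapOfStarMulSelfNonneg φ hφ
  norm_inner_le_norm (𝕜 := ℂ) (f.toPreGNS a) (f.toPreGNS b)

lemma apply_star_of_star_mul_self_nonneg (hφ : ∀ a, 0 ≤ φ (star a * a)) (a : A) :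
    φ (star a) = star (φ a) :=
  map_star (positiveLinearMapOfStarMulSelfNonneg φ hφ) a

end StarMulSelfNonneg

lemma apply_mul_eq_zero_of_apply_star_mul_self_eq_zero {φ : A →L[ℂ] ℂ}
    (hφ : ∀ a, 0 ≤ φ (star a * a)) {b : A} (hb : φ (star b * b) = 0) (a : A) :
    φ (a * b) = 0 := by
  simpa [hb] using norm_apply_star_mul_le hφ (star a) b

namespace IsState

variable {φ : A →L[ℂ] ℂ} (hφ : IsState φ)
include hφ

lemma nontrivial : Nontrivial A := by
  have hφ0 : φ ≠ 0 := by rintro rfl; simp [IsState] at hφ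
  obtain ⟨a, ha⟩ := DFunLike.ne_iff.mp hφ0
  exact nontrivial_of_ne a 0 fun h => by simp [h] at ha

lemma norm_apply_le_one_of_mem_unitary {u : A} (hu : u ∈ unitary A) : ‖φ u‖ ≤ 1 := by
  have := hφ.nontrivial
  simpa [hφ.1, CStarRing.norm_of_mem_unitary hu] using φ.le_opNorm u

lemma sqrt_re_apply_star_mul_self_le (a : A) : √(φ (star a * a)).re ≤ ‖a‖ := by
  have h : (φ (star a * a)).re ≤ ‖a‖ ^ 2 := calc
    (φ (star a * a)).re ≤ ‖φ (star a * a)‖ := Complex.re_le_norm _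
    _ ≤ ‖φ‖ * ‖star a * a‖ := φ.le_opNorm _
    _ = ‖a‖ ^ 2 := by rw [hφ.1, one_mul, CStarRing.norm_star_mul_self, sq]
  exact Real.sqrt_le_iff.mpr ⟨norm_nonneg a, h⟩

lemma apply_one : φ 1 = 1 := by
  have := hφ.nontrivial
  obtain ⟨-, him⟩ := Complex.nonneg_iff.mp (by simpa using hφ.2 1)
  set r := (φ 1).re
  have hφ_le : ‖φ‖ ≤ √r := φ.opNorm_le_bound (Real.sqrt_nonneg r) fun x => calc
    ‖φ x‖ = ‖φ (star 1 * x)‖ := by simp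
    _ ≤ √(φ (star 1 * 1)).re * √(φ (star x * x)).re := norm_apply_star_mul_le hφ.2 1 x
    _ ≤ √r * ‖x‖ := by
      simpa using mul_le_mul_of_nonneg_left (hφ.sqrt_re_apply_star_mul_self_le x)
        (Real.sqrt_nonneg r)
  have hr_le : √r ≤ 1 := by simpa using hφ.sqrt_re_apply_star_mul_self_le 1
  have hr : r = 1 := by
    rw [← Real.sqrt_eq_one]
    linarith [hφ.1]
  exact Complex.ext hr (by simpa using him.symm)

lemma apply_mul_of_mem_unitary {u : A} (hu : u ∈ unitary A) (hφu : ‖φ u‖ = 1) (a : A) :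
    φ (a * u) = φ a * φ u := by
  have hcc : φ u * star (φ u) = 1 := by
    rw [Complex.star_def, Complex.mul_conj', hφu]; norm_num
  have hkernel : φ (star (u - φ u • 1) * (u - φ u • 1)) = 0 := by
    have expand : star (u - φ u • 1) * (u - φ u • 1)
        = star u * u - φ u • star u - star (φ u) • u + (φ u * star (φ u)) • 1 := by
      simp only [star_sub, star_smul, star_one, sub_mul, mul_sub, smul_mul_assoc, mul_smul_comm,
        mul_one, one_mul, smul_smul, smul_sub]
      abel
    rw [expand, (Unitary.mem_iff.mp hu).1]
    simp only [map_add, map_sub, map_smul, hφ.apply_one, apply_star_of_star_mul_self_nonneg hφ.2,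
      smul_eq_mul]
    linear_combination -hcc
  have := apply_mul_eq_zero_of_apply_star_mul_self_eq_zero hφ.2 hkernel a
  rw [mul_sub, mul_smul_comm, mul_one, map_sub, map_smul, smul_eq_mul, sub_eq_zero] at this
  rw [this, mul_comm]

lemma map_mul_of_forall_unitary (hu : ∀ u ∈ unitary A, 1 ≤ ‖φ u‖) (a b : A) :
    φ (a * b) = φ a * φ b := by
  have hb : b ∈ Submodule.span ℂ (unitary A : Set A) := by
    rw [CStarAlgebra.span_unitary]; trivial
  induction hb using Submodule.span_induction with
  | mem u hu' =>
    exact hφ.apply_mul_of_mem_unitary hu'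
      (le_antisymm (hφ.norm_apply_le_one_of_mem_unitary hu') (hu u hu')) a
  | zero => simp
  | add x y _ _ hx hy => rw [mul_add, map_add, map_add, hx, hy, mul_add]
  | smul c x _ hx =>
    rw [mul_smul_comm, map_smul, map_smul, hx, smul_eq_mul, smul_eq_mul, mul_left_comm]

lemma one_le_norm_apply_of_map_mul (hmul : ∀ a b, φ (a * b) = φ a * φ b) {u : A}
    (hu : u ∈ unitary A) : 1 ≤ ‖φ u‖ := calc
  1 = ‖φ u‖ * ‖φ (star u)‖ := by
    rw [← norm_mul, ← hmul, (Unitary.mem_iff.mp hu).2, hφ.apply_one, norm_one]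
  _ ≤ ‖φ u‖ := mul_le_of_le_one_right (norm_nonneg _)
    (hφ.norm_apply_le_one_of_mem_unitary (Unitary.star_mem hu))

end IsState

lemma isState_iff {φ : A →L[ℂ] ℂ} :
    IsState φ ↔ ‖φ‖ ≤ 1 ∧ φ 1 = 1 ∧ ∀ a, 0 ≤ φ (star a * a) := by
  refine ⟨fun hφ => ⟨hφ.1.le, hφ.apply_one, hφ.2⟩,
    fun ⟨hle, h1, hpos⟩ => ⟨le_antisymm hle ?_, hpos⟩⟩
  have : Nontrivial A := nontrivial_of_ne 1 0 fun h => by simp [h] at h1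
  simpa [h1] using φ.le_opNorm 1

lemma isCompact_setOf_isState :
    IsCompact {ψ : WeakDual ℂ A | IsState (WeakDual.toStrongDual ψ)} := by
  have hset : {ψ : WeakDual ℂ A | IsState (WeakDual.toStrongDual ψ)} =
      WeakDual.toStrongDual ⁻¹' Metric.closedBall 0 1 ∩
        ({ψ | ψ 1 = 1} ∩ ⋂ a : A, {ψ | 0 ≤ ψ (star a * a)}) := by
    ext ψ
    simp [isState_iff]
  rw [hset]
  exact (WeakDual.isCompact_closedBall 0 1).inter_right
    ((isClosed_eq (WeakDual.eval_continuous 1) continuous_const).inter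
      (isClosed_iInter fun a => isClosed_le continuous_const (WeakDual.eval_continuous _)))

namespace HasNEpsilonCharacters

variable {N : ℕ} {ε : ℝ}

lemma mono (h : HasNEpsilonCharacters A N ε) {M : ℕ} (hMN : M ≤ N) :
    HasNEpsilonCharacters A M ε := by
  intro u hu
  obtain ⟨φ, hφ, hφu⟩ := h (fun j => if hj : (j : ℕ) < M then u ⟨j, hj⟩ else 1)
    fun j => by split_ifs; exacts [hu _, one_mem _]
  exact ⟨φ, hφ, fun j => by simpa using hφu (Fin.castLE hMN j)⟩

lemma exists_isState_forall_mem_finset {ι : Type*} (t : Finset ι)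
    (h : HasNEpsilonCharacters A t.card ε) (u : ι → A) (hu : ∀ i, u i ∈ unitary A) :
    ∃ φ : A →L[ℂ] ℂ, IsState φ ∧ ∀ i ∈ t, 1 - ε ≤ ‖φ (u i)‖ := by
  obtain ⟨φ, hφ, hφu⟩ := h (fun j => u (t.equivFin.symm j)) fun j => hu _
  exact ⟨φ, hφ, fun i hi => by simpa using hφu (t.equivFin ⟨i, hi⟩)⟩

end HasNEpsilonCharacters

lemma exists_isState_forall_unitary_one_le_norm
    (h : ∀ N ε, 0 < ε → HasNEpsilonCharacters A N ε) :
    ∃ φ : A →L[ℂ] ℂ, IsState φ ∧ ∀ u ∈ unitary A, 1 ≤ ‖φ u‖ := by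
  let T : unitary A × ℕ → Set (WeakDual ℂ A) :=
    fun i => {ψ | 1 - 1 / ((i.2 : ℝ) + 1) ≤ ‖ψ i.1‖}
  have hT_closed : ∀ i, IsClosed (T i) := fun i =>
    isClosed_le continuous_const (WeakDual.eval_continuous _).norm
  have hfinite : ∀ t : Finset (unitary A × ℕ),
      ({ψ | IsState (WeakDual.toStrongDual ψ)} ∩ ⋂ i ∈ t, T i).Nonempty := by
    intro t
    obtain ⟨φ, hφ, hφt⟩ := (h t.card (1 / ((t.sup Prod.snd : ℕ) + 1))
      Nat.one_div_pos_of_nat).exists_isState_forall_mem_finset t (fun i => i.1.1) fun i => i.1.2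
    refine ⟨WeakDual.toStrongDual.symm φ, hφ, Set.mem_iInter₂.mpr fun i hi => ?_⟩
    refine le_trans ?_ (hφt i hi)
    gcongr
    exact Finset.le_sup hi
  obtain ⟨ψ, hψ, hψT⟩ := isCompact_setOf_isState.inter_iInter_nonempty T hT_closed hfinite
  refine ⟨WeakDual.toStrongDual ψ, hψ, fun u hu => ?_⟩
  have hlim := tendsto_one_div_add_atTop_nhds_zero_nat.const_sub (1 : ℝ)
  rw [sub_zero] at hlim
  exact le_of_tendsto' hlim fun n => Set.mem_iInter.mp hψT (⟨u, hu⟩, n)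

/-- a unital C*-algebra has a character (a multiplicative state) if and
only if it has `(N,ε)`-characters for every integer `N ≥ 2` and every `ε > 0`. -/
theorem character_iff_approx_characters (A : Type*) [CStarAlgebra A] :
    (∃ φ : A →L[ℂ] ℂ, IsState φ ∧ ∀ a b : A, φ (a * b) = φ a * φ b) ↔
      ∀ N : ℕ, 2 ≤ N → ∀ ε : ℝ, 0 < ε → HasNEpsilonCharacters A N ε := by
  constructor
  · rintro ⟨φ, hφ, hmul⟩ N - ε hε u hu
    exact ⟨φ, hφ, fun j => by linarith [hφ.one_le_norm_apply_of_map_mul hmul (hu j)]⟩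
  · intro h
    obtain ⟨φ, hφ, hu⟩ := exists_isState_forall_unitary_one_le_norm fun N ε hε =>
      (h (N + 2) (by omega) ε hε).mono (by omega)
    exact ⟨φ, hφ, hφ.map_mul_of_forall_unitary hu⟩
end

section
/- Let A be a unital C*-algebra and b_1, …, b_n positive elements of A such that 1_A is Cuntz subequivalent to b_1 ⊕ ⋯ ⊕ b_n (i.e., Σ⟨b_j⟩ ≥ ⟨1_A⟩ in Cu(A)). Then there exist ε > 0 and contractions y_1, …, y_n in A with Σ_{j=1}^n y_j* h_ε(b_j) y_j = 1_A, where h_ε : ℝ⁺ → [0,1] is continuous with h_ε(0) = 0 and h_ε(t) = 1 for t ≥ ε. -/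
/-!
Choose `d` with `∑ d_j* b_j d_j` within `1/2` of `1`. Cutting each `b_j` down to `(b_j - ε)_+`
moves this sum by at most `ε ∑ ‖d_j‖²`, so for small `ε` the sum `z` is still within distance `1`
of `1`, hence positive and invertible, and `w_j := d_j z^{-1/2}` satisfies
`∑ w_j* (b_j - ε)_+ w_j = 1`. Finally `y_j := (b_j - ε)_+^{1/2} w_j` works for every `h_ε`, because
`h_ε = 1` on the support of `(t - ε)_+`; the same identity with `h = 1` gives `y_j* y_j ≤ 1`.
-/

open CFC

section FunctionalCalculus

variable {R A : Type*} {p : A → Prop} [CommSemiring R] [StarRing R] [MetricSpace R]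
  [IsTopologicalSemiring R] [ContinuousStar R] [TopologicalSpace A] [Ring A] [StarRing A]
  [Algebra R A] [ContinuousFunctionalCalculus R A p]

lemma cfc_mul_cfc_eq_left {a : A} {g h : R → R} (hg : ContinuousOn g (spectrum R a))
    (hh : ContinuousOn h (spectrum R a)) (hgh : ∀ t ∈ spectrum R a, g t ≠ 0 → h t = 1) :
    cfc g a * cfc h a = cfc g a := by
  rw [← cfc_mul g h a]
  refine cfc_congr fun t ht => ?_
  by_cases hgt : g t = 0
  · simp [hgt]
  · simp [hgh t ht hgt]

end FunctionalCalculus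

lemma cfc_sqrt_mul_self {A : Type*} {p : A → Prop} [Ring A] [StarRing A] [TopologicalSpace A]
    [Algebra ℝ A] [ContinuousFunctionalCalculus ℝ A p] {a : A} {f : ℝ → ℝ}
    (hf : ContinuousOn f (spectrum ℝ a)) (hf0 : ∀ t ∈ spectrum ℝ a, 0 ≤ f t) :
    cfc (fun t => √(f t)) a * cfc (fun t => √(f t)) a = cfc f a := by
  have hsqrt : ContinuousOn (fun t => √(f t)) (spectrum ℝ a) := hf.sqrt
  rw [← cfc_mul _ _ a]
  exact cfc_congr fun t ht => Real.mul_self_sqrt (hf0 t ht)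

lemma norm_sum_star_mul_mul_sub_le {ι A : Type*} [Fintype ι] [NormedRing A] [StarRing A]
    [NormedStarGroup A] (e x x' : ι → A) {δ : ℝ} (h : ∀ j, ‖x j - x' j‖ ≤ δ) :
    ‖∑ j, star (e j) * x j * e j - ∑ j, star (e j) * x' j * e j‖ ≤
      (∑ j, ‖e j‖ ^ 2) * δ := by
  rw [← Finset.sum_sub_distrib, Finset.sum_mul]
  refine (norm_sum_le _ _).trans (Finset.sum_le_sum fun j _ => ?_)
  calc ‖star (e j) * x j * e j - star (e j) * x' j * e j‖
      = ‖star (e j) * (x j - x' j) * e j‖ := by noncomm_ring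
    _ ≤ ‖e j‖ * ‖x j - x' j‖ * ‖e j‖ := by
        refine (norm_mul_le _ _).trans ?_
        rw [← norm_star (e j)]
        gcongr
        exact norm_mul_le _ _
    _ ≤ ‖e j‖ ^ 2 * δ := by nlinarith [h j, norm_nonneg (e j)]

section CStarAlgebra

variable {A : Type*} [CStarAlgebra A] [PartialOrder A] [StarOrderedRing A]

lemma norm_sub_cfc_max_sub_le {a : A} (ha : 0 ≤ a) {ε : ℝ} (hε : 0 ≤ ε) :
    ‖a - cfc (fun t : ℝ => max (t - ε) 0) a‖ ≤ ε := by
  have hcut : Continuous fun t : ℝ => max (t - ε) 0 := by fun_prop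
  have hsub :
      a - cfc (fun t : ℝ => max (t - ε) 0) a = cfc (fun t : ℝ => t - max (t - ε) 0) a := by
    rw [cfc_sub (fun t : ℝ => t) _ a continuousOn_id hcut.continuousOn, cfc_id' ℝ a]
  rw [hsub]
  refine norm_cfc_le hε fun t ht => ?_
  have ht0 : 0 ≤ t := spectrum_nonneg_of_nonneg ha ht
  have h1 : t - ε ≤ max (t - ε) 0 := le_max_left _ _
  have h2 : max (t - ε) 0 ≤ t := max_le (by linarith) ht0
  rw [Real.norm_eq_abs, abs_le]
  constructor <;> linarith

lemma norm_le_one_of_star_mul_self_le_one {y : A} (hy : star y * y ≤ 1) : ‖y‖ ≤ 1 := by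
  have h : ‖y‖ * ‖y‖ ≤ 1 := by
    rw [← CStarRing.norm_star_mul_self]
    exact (CStarAlgebra.norm_le_one_iff_of_nonneg _ (star_mul_self_nonneg y)).mpr hy
  nlinarith [norm_nonneg y]

lemma exists_sum_star_mul_mul_eq_one {ι : Type*} [Fintype ι] {x e : ι → A}
    (hx : ∀ j, 0 ≤ x j) (he : ‖∑ j, star (e j) * x j * e j - 1‖ < 1) :
    ∃ w : ι → A, ∑ j, star (w j) * x j * w j = 1 := by
  set z := ∑ j, star (e j) * x j * e j
  have hz : IsStrictlyPositive z := by
    refine IsUnit.isStrictlyPositive ?_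
      (Finset.sum_nonneg fun j _ => star_left_conjugate_nonneg (hx j) _)
    by_contra hz
    exact nonunits.subset_compl_ball hz (by rwa [Metric.mem_ball, dist_eq_norm])
  set s := sqrt (Ring.inverse z)
  refine ⟨fun j => e j * s, ?_⟩
  calc ∑ j, star (e j * s) * x j * (e j * s) = star s * z * s := by
        simp only [z, Finset.mul_sum, Finset.sum_mul, star_mul, mul_assoc]
    _ = 1 := by
        rw [(sqrt_nonneg _).isSelfAdjoint.star_eq]
        exact conjSqrt_ringInverse_self z

lemma exists_contractions_of_sum_cfc_max_sub_eq_one {ι : Type*} [Fintype ι] {a w : ι → A}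
    {ε : ℝ} (hw : ∑ j, star (w j) * cfc (fun t : ℝ => max (t - ε) 0) (a j) * w j = 1) :
    ∃ y : ι → A, (∀ j, ‖y j‖ ≤ 1) ∧ ∀ h : ℝ → ℝ, Continuous h → (∀ t, ε ≤ t → h t = 1) →
      ∑ j, star (y j) * cfc h (a j) * y j = 1 := by
  set G : ι → A := fun j => cfc (fun t : ℝ => max (t - ε) 0) (a j)
  set r : ι → A := fun j => cfc (fun t : ℝ => √(max (t - ε) 0)) (a j)
  have hr : ∀ j, r j * r j = G j := fun j =>
    cfc_sqrt_mul_self (by fun_prop) fun t _ => le_max_right _ _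
  have hr_star : ∀ j, star (r j) = r j := fun j => (cfc_predicate _ _ : IsSelfAdjoint (r j))
  have hrh : ∀ h : ℝ → ℝ, Continuous h → (∀ t, ε ≤ t → h t = 1) → ∀ j,
      r j * cfc h (a j) = r j := fun h hh hh1 j =>
    cfc_mul_cfc_eq_left (by fun_prop) hh.continuousOn fun t _ ht => hh1 t <| by
      by_contra hlt
      exact ht (by rw [max_eq_right (by linarith), Real.sqrt_zero])
  have hconj : ∀ j, star (r j * w j) * (r j * w j) = star (w j) * G j * w j := fun j => by
    rw [star_mul, hr_star, ← hr, mul_assoc, mul_assoc, mul_assoc]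
  refine ⟨fun j => r j * w j, fun j => ?_, fun h hh hh1 => ?_⟩
  · refine norm_le_one_of_star_mul_self_le_one ?_
    rw [hconj, ← hw]
    exact Finset.single_le_sum (f := fun i => star (w i) * G i * w i)
      (fun i _ => star_left_conjugate_nonneg (cfc_nonneg fun _ _ => le_max_right _ _) _)
      (Finset.mem_univ j)
  · rw [← hw]
    refine Finset.sum_congr rfl fun j _ => ?_
    calc star (r j * w j) * cfc h (a j) * (r j * w j)
        = star (w j) * (r j * cfc h (a j)) * (r j * w j) := by
          simp only [star_mul, hr_star, mul_assoc]
      _ = star (w j) * G j * w j := by rw [hrh h hh hh1, ← hconj, star_mul, hr_star, mul_assoc]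

end CStarAlgebra

/-- Let `A` be a unital C*-algebra and `b 1, …, b n` positive elements
such that `1_A` is Cuntz subequivalent to `b 1 ⊕ ⋯ ⊕ b n`.  Then there are `ε > 0` and
contractions `y 1, …, y n` in `A` with `∑ j, (y j)* h_ε(b j) (y j) = 1`, where
`h_ε : ℝ⁺ → [0,1]` is any continuous function with `h_ε 0 = 0` and `h_ε t = 1` for
`t ≥ ε`. -/
theorem cuntz_dominates_unit_exact {A : Type*} [CStarAlgebra A] [PartialOrder A]
    [StarOrderedRing A]
    (n : ℕ) (b : Fin n → A) (hb : ∀ j, 0 ≤ b j)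
    (hsub : ∃ d : ℕ → Fin n → A,
      Filter.Tendsto (fun k => ∑ j, star (d k j) * b j * d k j)
        Filter.atTop (nhds (1 : A))) :
    ∃ ε > (0 : ℝ), ∃ y : Fin n → A, (∀ j, ‖y j‖ ≤ 1) ∧
      ∀ h : ℝ → ℝ, Continuous h → h 0 = 0 → (∀ t : ℝ, ε ≤ t → h t = 1) →
        (∀ t : ℝ, 0 ≤ t → h t ∈ Set.Icc (0 : ℝ) 1) →
        ∑ j, star (y j) * cfc h (b j) * y j = 1 := by
  obtain ⟨d, hd⟩ := hsub
  obtain ⟨k, hk⟩ := Metric.tendsto_atTop.mp hd (1 / 2) one_half_pos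
  set C := ∑ j, ‖d k j‖ ^ 2
  set ε : ℝ := 1 / (2 * (C + 1))
  have hC : 0 ≤ C := by positivity
  have hε : 0 < ε := by positivity
  have hCε : C * ε < 1 / 2 := by
    rw [mul_one_div, div_lt_iff₀ (by positivity)]
    linarith
  set G : Fin n → A := fun j => cfc (fun t : ℝ => max (t - ε) 0) (b j)
  have hperturb := norm_sum_star_mul_mul_sub_le (d k) G b fun j => by
    rw [norm_sub_rev]
    exact norm_sub_cfc_max_sub_le (hb j) hε.le
  have hnear : ‖∑ j, star (d k j) * G j * d k j - 1‖ < 1 := by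
    have hk' := hk k le_rfl
    rw [dist_eq_norm] at hk'
    linarith [norm_sub_le_norm_sub_add_norm_sub
      (∑ j, star (d k j) * G j * d k j) (∑ j, star (d k j) * b j * d k j) 1]
  obtain ⟨w, hw⟩ :=
    exists_sum_star_mul_mul_eq_one (fun j => cfc_nonneg fun _ _ => le_max_right _ _) hnear
  obtain ⟨y, hy, hyh⟩ := exists_contractions_of_sum_cfc_max_sub_eq_one hw
  exact ⟨ε, hε, y, hy, fun h hh _ hh1 _ => hyh h hh hh1⟩
end
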